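/- arXiv:1208.3830 — 3 statements merged into one kernel-verified Lean document; each statement's English description precedes it below -/
import Mathlib

section
/- Fix reals r, b, σ, β, T, c₁, c₂ with b > r > 0, σ ≠ 0, β > 2, T > 0, c₁ < 0 ≤ c₂, η := β(b−r)²/(2(β−1)σ²) − βr ≠ 0, and suppose c₁ ≤ ũ := −(b−r)/((β−1)σ²) ≤ c₂. Define w(t) := (1/η)·(1 − e^{η(t−T)}) and v(t,x) := (−x)^{β}·w(t) for x ≤ 0 and v(t,x) := 0 for x > 0. Then v(T,x) = 0 for all x ≤ 0, the partial derivatives ∂ₜv, ∂ₓv, ∂²ₓv exist and are continuous on [0,T] × (−∞,0], and for every (t,x) ∈ [0,T] × (−∞,0]: −∂ₜv(t,x) = min over u ∈ [c₁,c₂] of [ (1/2)·(σ·u·x)²·∂²ₓv(t,x) + (r + (b−r)u)·x·∂ₓv(t,x) + (−x)^{β} ], with the minimum attained at u = ũ. -/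
/-!
With the power ansatz `v(t,x) = (-x)^β w(t)`, every term of the Hamiltonian is a multiple of
`(-x)^β`, and the Hamiltonian becomes `(-x)^β (1 + g(u) w(t))` with the quadratic
`g(u) = ½σ²β(β-1)u² + β(r + (b-r)u)`. Completing the square gives
`g(u) = -η + ½σ²β(β-1)(u - ũ)²`, so for `w ≥ 0` the minimum over `u` sits at `ũ`, and the
HJB equation reduces to the linear ODE `w' = η w - 1`, `w(T) = 0`, solved by
`w(t) = (1 - e^{η(t-T)})/η`. This `w` is nonnegative before `T` for either sign of `η`.
-/

open Real Set

lemma hasDerivAt_neg_rpow {p : ℝ} (hp : 1 ≤ p) (x : ℝ) :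
    HasDerivAt (fun y : ℝ => (-y) ^ p) (-(p * (-x) ^ (p - 1))) x := by
  simpa [Function.comp_def] using
    (hasDerivAt_rpow_const (x := -x) (Or.inr hp)).comp x (hasDerivAt_neg x)

lemma neg_rpow_eq_pow_mul_neg_rpow_sub {x p : ℝ} (hx : x ≤ 0) (hp : p ≠ 0) (n : ℕ) :
    (-x) ^ p = (-x) ^ n * (-x) ^ (p - n) := by
  rw [← rpow_natCast, ← rpow_add' (neg_nonneg.mpr hx) (by simpa using hp)]
  ring_nf

lemma hasDerivAt_one_div_mul_one_sub_exp {η : ℝ} (hη : η ≠ 0) (T t : ℝ) :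
    HasDerivAt (fun s => 1 / η * (1 - exp (η * (s - T)))) (-exp (η * (t - T))) t := by
  have hlin : HasDerivAt (fun s => η * (s - T)) η t := by
    simpa using ((hasDerivAt_id t).sub_const T).const_mul η
  exact (((hlin.exp).const_sub 1).const_mul (1 / η)).congr_deriv (by field_simp)

lemma one_div_mul_one_sub_exp_nonneg (η : ℝ) {s : ℝ} (hs : s ≤ 0) :
    0 ≤ 1 / η * (1 - exp (η * s)) := by
  rcases le_total η 0 with hη | hη
  · exact mul_nonneg_of_nonpos_of_nonpos (by simpa using hη)
      (sub_nonpos.mpr (one_le_exp (mul_nonneg_of_nonpos_of_nonpos hη hs)))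
  · exact mul_nonneg (by positivity)
      (sub_nonneg.mpr (exp_le_one_iff.mpr (mul_nonpos_of_nonneg_of_nonpos hη hs)))

lemma hamiltonian_power_ansatz {r b σ β x : ℝ} (hx : x ≤ 0) (hβ : β ≠ 0) (u W : ℝ) :
    (1 / 2) * (σ * u * x) ^ 2 * (β * (β - 1) * (-x) ^ (β - 2) * W)
        + (r + (b - r) * u) * x * (-(β * (-x) ^ (β - 1) * W)) + (-x) ^ β
      = (-x) ^ β
          * (1 + ((1 / 2) * σ ^ 2 * β * (β - 1) * u ^ 2 + β * (r + (b - r) * u)) * W) := by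
  have h2 := neg_rpow_eq_pow_mul_neg_rpow_sub hx hβ 2
  have h1 := neg_rpow_eq_pow_mul_neg_rpow_sub hx hβ 1
  push_cast at h1 h2
  linear_combination (-(1 / 2) * σ ^ 2 * u ^ 2 * β * (β - 1) * W) * h2
    - ((r + (b - r) * u) * β * W) * h1

lemma hamiltonian_quadratic_eq {r b σ β : ℝ} (hσ : σ ≠ 0) (hβ : β - 1 ≠ 0) (u : ℝ) :
    (1 / 2) * σ ^ 2 * β * (β - 1) * u ^ 2 + β * (r + (b - r) * u)
      = -(β * (b - r) ^ 2 / (2 * (β - 1) * σ ^ 2) - β * r)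
        + (1 / 2) * σ ^ 2 * β * (β - 1) * (u - -(b - r) / ((β - 1) * σ ^ 2)) ^ 2 := by
  field_simp
  ring

theorem stmt3_general (r b σ β T c₁ c₂ η u0 : ℝ)
    (hσ : σ ≠ 0) (hβ : 2 < β)
    (hη : η = β * (b - r)^2 / (2 * (β - 1) * σ^2) - β * r) (hη0 : η ≠ 0)
    (hu0 : u0 = -(b - r) / ((β - 1) * σ^2))
    (w : ℝ → ℝ) (hw : w = fun t => (1/η) * (1 - Real.exp (η * (t - T))))
    (v : ℝ → ℝ → ℝ) (hv : v = fun t x => if x ≤ 0 then (-x) ^ β * w t else 0) :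
    (∀ x ≤ (0:ℝ), v T x = 0) ∧
    ∃ vt vx vxx : ℝ → ℝ → ℝ,
      (∀ t ∈ Set.Icc (0:ℝ) T, ∀ x ≤ (0:ℝ),
        HasDerivWithinAt (fun s => v s x) (vt t x) (Set.Icc (0:ℝ) T) t ∧
        HasDerivWithinAt (fun y => v t y) (vx t x) (Set.Iic (0:ℝ)) x ∧
        HasDerivWithinAt (fun y => vx t y) (vxx t x) (Set.Iic (0:ℝ)) x) ∧
      ContinuousOn (fun p : ℝ × ℝ => vt p.1 p.2) (Set.Icc (0:ℝ) T ×ˢ Set.Iic (0:ℝ)) ∧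
      ContinuousOn (fun p : ℝ × ℝ => vx p.1 p.2) (Set.Icc (0:ℝ) T ×ˢ Set.Iic (0:ℝ)) ∧
      ContinuousOn (fun p : ℝ × ℝ => vxx p.1 p.2) (Set.Icc (0:ℝ) T ×ˢ Set.Iic (0:ℝ)) ∧
      (∀ t ∈ Set.Icc (0:ℝ) T, ∀ x ≤ (0:ℝ),
        (-(vt t x) =
          (1/2) * (σ * u0 * x)^2 * vxx t x + (r + (b - r) * u0) * x * vx t x + (-x) ^ β) ∧
        (∀ u ∈ Set.Icc c₁ c₂, -(vt t x) ≤
          (1/2) * (σ * u * x)^2 * vxx t x + (r + (b - r) * u) * x * vx t x + (-x) ^ β)) := by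
  have hβ0 : β ≠ 0 := by positivity
  have hβ1 : β - 1 ≠ 0 := by linarith
  have hv_ansatz : ∀ t, ∀ x ≤ (0:ℝ), v t x = (-x) ^ β * w t := fun t x hx => by
    simp [hv, hx]
  have hw_cont : Continuous w := by rw [hw]; fun_prop
  have hηw : ∀ t, η * w t = 1 - exp (η * (t - T)) := fun t => by rw [hw]; field_simp
  refine ⟨fun x hx => by simp [hv_ansatz T x hx, hw],
    fun t x => -((-x) ^ β * exp (η * (t - T))), fun t x => -(β * (-x) ^ (β - 1) * w t),
    fun t x => β * (β - 1) * (-x) ^ (β - 2) * w t,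
    fun t _ x hx => ⟨?_, ?_, ?_⟩, ?_, ?_, ?_, fun t ht x hx => ?_⟩
  · simp only [hv_ansatz _ x hx, hw]
    exact ((hasDerivAt_one_div_mul_one_sub_exp hη0 T t).const_mul ((-x) ^ β)).hasDerivWithinAt
      |>.congr_deriv (by ring)
  · exact ((hasDerivAt_neg_rpow (p := β) (by linarith) x).mul_const (w t)).hasDerivWithinAt
      |>.congr (fun y hy => hv_ansatz t y hy) (hv_ansatz t x hx) |>.congr_deriv (by ring)
  · exact (((hasDerivAt_neg_rpow (p := β - 1) (by linarith) x).const_mul β).mul_const (w t)).neg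
      |>.hasDerivWithinAt.congr_deriv (by ring_nf)
  iterate 3 exact Continuous.continuousOn (by fun_prop (disch := linarith))
  have hw_nonneg : 0 ≤ w t := by
    simpa [hw] using one_div_mul_one_sub_exp_nonneg η (sub_nonpos.mpr ht.2)
  simp only [hamiltonian_power_ansatz hx hβ0, hamiltonian_quadratic_eq hσ hβ1, ← hη, ← hu0]
  refine ⟨by linear_combination (-x) ^ β * hηw t, fun u _ => ?_⟩
  have hsq : 0 ≤ (-x) ^ β * (σ ^ 2 * (β * (β - 1)) * (u - u0) ^ 2 * w t) :=
    mul_nonneg (rpow_nonneg (neg_nonneg.mpr hx) β)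
      (mul_nonneg (mul_nonneg (mul_nonneg (sq_nonneg σ) (by nlinarith)) (sq_nonneg _)) hw_nonneg)
  linear_combination hsq / 2 + (-x) ^ β * hηw t

theorem stmt3 (r b σ β T c₁ c₂ η u0 : ℝ)
    (hbr : r < b) (hr : 0 < r) (hσ : σ ≠ 0) (hβ : 2 < β) (hT : 0 < T)
    (hc₁ : c₁ < 0) (hc₂ : 0 ≤ c₂)
    (hη : η = β * (b - r)^2 / (2 * (β - 1) * σ^2) - β * r) (hη0 : η ≠ 0)
    (hu0 : u0 = -(b - r) / ((β - 1) * σ^2)) (hu0c : u0 ∈ Set.Icc c₁ c₂)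
    (w : ℝ → ℝ) (hw : w = fun t => (1/η) * (1 - Real.exp (η * (t - T))))
    (v : ℝ → ℝ → ℝ) (hv : v = fun t x => if x ≤ 0 then (-x) ^ β * w t else 0) :
    (∀ x ≤ (0:ℝ), v T x = 0) ∧
    ∃ vt vx vxx : ℝ → ℝ → ℝ,
      (∀ t ∈ Set.Icc (0:ℝ) T, ∀ x ≤ (0:ℝ),
        HasDerivWithinAt (fun s => v s x) (vt t x) (Set.Icc (0:ℝ) T) t ∧
        HasDerivWithinAt (fun y => v t y) (vx t x) (Set.Iic (0:ℝ)) x ∧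
        HasDerivWithinAt (fun y => vx t y) (vxx t x) (Set.Iic (0:ℝ)) x) ∧
      ContinuousOn (fun p : ℝ × ℝ => vt p.1 p.2) (Set.Icc (0:ℝ) T ×ˢ Set.Iic (0:ℝ)) ∧
      ContinuousOn (fun p : ℝ × ℝ => vx p.1 p.2) (Set.Icc (0:ℝ) T ×ˢ Set.Iic (0:ℝ)) ∧
      ContinuousOn (fun p : ℝ × ℝ => vxx p.1 p.2) (Set.Icc (0:ℝ) T ×ˢ Set.Iic (0:ℝ)) ∧
      (∀ t ∈ Set.Icc (0:ℝ) T, ∀ x ≤ (0:ℝ),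
        (-(vt t x) =
          (1/2) * (σ * u0 * x)^2 * vxx t x + (r + (b - r) * u0) * x * vx t x + (-x) ^ β) ∧
        (∀ u ∈ Set.Icc c₁ c₂, -(vt t x) ≤
          (1/2) * (σ * u * x)^2 * vxx t x + (r + (b - r) * u) * x * vx t x + (-x) ^ β)) :=
  stmt3_general r b σ β T c₁ c₂ η u0 hσ hβ hη hη0 hu0 w hw v hv
end

section
/- Fix reals r, b, σ, β, T, c₁, c₂ with b > r > 0, σ ≠ 0, β > 2, T > 0, c₁ < 0 ≤ c₂, η := β(b−r)²/(2(β−1)σ²) − βr, and suppose c₁ ≤ ũ := −(b−r)/((β−1)σ²) ≤ c₂. Define v(t,x) := (−x)^{β}·e^{η(t−T)} for x ≤ 0 and v(t,x) := 0 for x > 0. Then v(T,x) = (−x)^{β} for all x ≤ 0, the partial derivatives ∂ₜv, ∂ₓv, ∂²ₓv exist and are continuous on [0,T] × (−∞,0], and for every (t,x) ∈ [0,T] × (−∞,0]: −∂ₜv(t,x) = min over u ∈ [c₁,c₂] of [ (1/2)·(σ·u·x)²·∂²ₓv(t,x) + (r + (b−r)u)·x·∂ₓv(t,x) ], with the minimum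 attained at u = ũ. -/
/-!
On `x ≤ 0` the candidate is separable, `v = (-x)^β · e^{η(t-T)}`, so `x² ∂²ₓv = β(β-1) v` and
`x ∂ₓv = -β v`. The Hamiltonian at control `u` is therefore `β v` times the quadratic
`σ²(β-1)/2 · u² + (b-r) u + r`, whose minimiser is `ũ` and whose minimum value is `-η/β`;
completing the square gives the HJB equation with the minimum attained at `ũ`.
-/

open Real Set

lemma continuous_neg_rpow {p : ℝ} (hp : 0 ≤ p) : Continuous fun y : ℝ => (-y) ^ p :=
  (continuous_rpow_const hp).comp continuous_neg

lemma sq_mul_neg_rpow_sub_two {x p : ℝ} (hx : x ≤ 0) (hp : p ≠ 0) :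
    x ^ 2 * (-x) ^ (p - 2) = (-x) ^ p := by
  rw [show (-x) ^ p = (-x) ^ (p - 2 + (2:ℕ)) by norm_num,
    rpow_add' (by linarith) (by simpa using hp), rpow_natCast]
  ring

lemma mul_neg_rpow_sub_one {x p : ℝ} (hx : x ≤ 0) (hp : p ≠ 0) :
    x * (-x) ^ (p - 1) = -(-x) ^ p := by
  rw [show (-x) ^ p = (-x) ^ (p - 1 + 1) by norm_num,
    rpow_add' (by linarith) (by simpa using hp), rpow_one]
  ring

lemma quadratic_eq_vertex_add_sq {a : ℝ} (ha : a ≠ 0) (c d u : ℝ) :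
    a * u ^ 2 + c * u + d = d - c ^ 2 / (4 * a) + a * (u + c / (2 * a)) ^ 2 := by
  field_simp
  ring

lemma continuous_mul_neg_rpow_mul_exp (c η T : ℝ) {q : ℝ} (hq : 0 ≤ q) :
    Continuous fun p : ℝ × ℝ => c * (-p.2) ^ q * exp (η * (p.1 - T)) :=
  (continuous_const.mul ((continuous_neg_rpow hq).comp continuous_snd)).mul (by fun_prop)

lemma hasDerivAt_mul_neg_rpow_mul {p : ℝ} (hp : 1 ≤ p) (c e x : ℝ) :
    HasDerivAt (fun y => c * (-y) ^ p * e) (-(c * p) * (-x) ^ (p - 1) * e) x :=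
  (((hasDerivAt_neg_rpow hp x).const_mul c).mul_const e).congr_deriv (by ring)

lemma hasDerivAt_mul_exp_mul_sub (c η T t : ℝ) :
    HasDerivAt (fun s => c * exp (η * (s - T))) (η * c * exp (η * (t - T))) t :=
  ((((hasDerivAt_id t).sub_const T).const_mul η).exp.const_mul c).congr_deriv
    (by simp only [id, mul_one]; ring)

lemma hamiltonian_neg_rpow (r b σ β η u0 u x e : ℝ) (hσ : σ ≠ 0) (hβ : 1 < β) (hx : x ≤ 0)
    (hη : η = β * (b - r) ^ 2 / (2 * (β - 1) * σ ^ 2) - β * r)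
    (hu0 : u0 = -(b - r) / ((β - 1) * σ ^ 2)) :
    (1/2) * (σ * u * x) ^ 2 * (β * (β - 1) * (-x) ^ (β - 2) * e)
        + (r + (b - r) * u) * x * (-β * (-x) ^ (β - 1) * e)
      = -(η * (-x) ^ β * e) + σ ^ 2 * (β - 1) / 2 * (u - u0) ^ 2 * (β * (-x) ^ β * e) := by
  have ha : σ ^ 2 * (β - 1) / 2 ≠ 0 := by
    have : β - 1 ≠ 0 := by linarith
    positivity
  have hvertex := quadratic_eq_vertex_add_sq ha (b - r) r u
  have hsq := sq_mul_neg_rpow_sub_two hx (p := β) (by linarith)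
  have hlin := mul_neg_rpow_sub_one hx (p := β) (by linarith)
  have hη' : -η = β * (r - (b - r) ^ 2 / (4 * (σ ^ 2 * (β - 1) / 2))) := by
    rw [hη]; field_simp; ring
  have hu0' : u - u0 = u + (b - r) / (2 * (σ ^ 2 * (β - 1) / 2)) := by
    rw [hu0]; field_simp; ring
  rw [hu0']
  linear_combination (1/2 * σ ^ 2 * u ^ 2 * β * (β - 1) * e) * hsq
    - ((r + (b - r) * u) * β * e) * hlin + (β * (-x) ^ β * e) * hvertex
    - ((-x) ^ β * e) * hη'

theorem stmt7_general (r b σ β T c₁ c₂ η u0 : ℝ)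
    (hσ : σ ≠ 0) (hβ : 2 < β)
    (hη : η = β * (b - r)^2 / (2 * (β - 1) * σ^2) - β * r)
    (hu0 : u0 = -(b - r) / ((β - 1) * σ^2))
    (v : ℝ → ℝ → ℝ)
    (hv : v = fun t x => if x ≤ 0 then (-x) ^ β * Real.exp (η * (t - T)) else 0) :
    (∀ x ≤ (0:ℝ), v T x = (-x) ^ β) ∧
    ∃ vt vx vxx : ℝ → ℝ → ℝ,
      (∀ t ∈ Set.Icc (0:ℝ) T, ∀ x ≤ (0:ℝ),
        HasDerivWithinAt (fun s => v s x) (vt t x) (Set.Icc (0:ℝ) T) t ∧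
        HasDerivWithinAt (fun y => v t y) (vx t x) (Set.Iic (0:ℝ)) x ∧
        HasDerivWithinAt (fun y => vx t y) (vxx t x) (Set.Iic (0:ℝ)) x) ∧
      ContinuousOn (fun p : ℝ × ℝ => vt p.1 p.2) (Set.Icc (0:ℝ) T ×ˢ Set.Iic (0:ℝ)) ∧
      ContinuousOn (fun p : ℝ × ℝ => vx p.1 p.2) (Set.Icc (0:ℝ) T ×ˢ Set.Iic (0:ℝ)) ∧
      ContinuousOn (fun p : ℝ × ℝ => vxx p.1 p.2) (Set.Icc (0:ℝ) T ×ˢ Set.Iic (0:ℝ)) ∧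
      (∀ t ∈ Set.Icc (0:ℝ) T, ∀ x ≤ (0:ℝ),
        (-(vt t x) =
          (1/2) * (σ * u0 * x)^2 * vxx t x + (r + (b - r) * u0) * x * vx t x) ∧
        (∀ u ∈ Set.Icc c₁ c₂, -(vt t x) ≤
          (1/2) * (σ * u * x)^2 * vxx t x + (r + (b - r) * u) * x * vx t x)) := by
  have hv_neg : ∀ t, ∀ x ≤ (0:ℝ), v t x = (-x) ^ β * exp (η * (t - T)) := fun t x hx => by
    simp [hv, hx]
  refine ⟨fun x hx => by simp [hv_neg T x hx],
    fun t x => η * (-x) ^ β * exp (η * (t - T)),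
    fun t x => -β * (-x) ^ (β - 1) * exp (η * (t - T)),
    fun t x => β * (β - 1) * (-x) ^ (β - 2) * exp (η * (t - T)),
    fun t _ x hx => ⟨?_, ?_, ?_⟩,
    (continuous_mul_neg_rpow_mul_exp _ _ _ (by linarith)).continuousOn,
    (continuous_mul_neg_rpow_mul_exp _ _ _ (by linarith)).continuousOn,
    (continuous_mul_neg_rpow_mul_exp _ _ _ (by linarith)).continuousOn,
    fun t _ x hx => ⟨?_, fun u _ => ?_⟩⟩
  · exact (hasDerivAt_mul_exp_mul_sub ((-x) ^ β) η T t).hasDerivWithinAt.congr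
      (fun s _ => hv_neg s x hx) (hv_neg t x hx)
  · exact ((hasDerivAt_mul_neg_rpow_mul (p := β) (by linarith) 1 (exp (η * (t - T))) x
      ).hasDerivWithinAt.congr
      (fun y hy => by simp [hv_neg t y hy]) (by simp [hv_neg t x hx])).congr_deriv (by ring)
  · exact (hasDerivAt_mul_neg_rpow_mul (p := β - 1) (by linarith) (-β) (exp (η * (t - T))) x
      ).hasDerivWithinAt.congr_deriv (by ring_nf)
  · rw [hamiltonian_neg_rpow r b σ β η u0 u0 x _ hσ (by linarith) hx hη hu0]
    ring
  · rw [hamiltonian_neg_rpow r b σ β η u0 u x _ hσ (by linarith) hx hη hu0]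
    have hβ1 : 0 ≤ β - 1 := by linarith
    have hβ0 : 0 ≤ β := by linarith
    have hpow := rpow_nonneg (neg_nonneg.2 hx) β
    have : 0 ≤ σ ^ 2 * (β - 1) / 2 * (u - u0) ^ 2 * (β * (-x) ^ β * exp (η * (t - T))) := by
      positivity
    linarith

theorem stmt7 (r b σ β T c₁ c₂ η u0 : ℝ)
    (hbr : r < b) (hr : 0 < r) (hσ : σ ≠ 0) (hβ : 2 < β) (hT : 0 < T)
    (hc₁ : c₁ < 0) (hc₂ : 0 ≤ c₂)
    (hη : η = β * (b - r)^2 / (2 * (β - 1) * σ^2) - β * r)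
    (hu0 : u0 = -(b - r) / ((β - 1) * σ^2)) (hu0c : u0 ∈ Set.Icc c₁ c₂)
    (v : ℝ → ℝ → ℝ)
    (hv : v = fun t x => if x ≤ 0 then (-x) ^ β * Real.exp (η * (t - T)) else 0) :
    (∀ x ≤ (0:ℝ), v T x = (-x) ^ β) ∧
    ∃ vt vx vxx : ℝ → ℝ → ℝ,
      (∀ t ∈ Set.Icc (0:ℝ) T, ∀ x ≤ (0:ℝ),
        HasDerivWithinAt (fun s => v s x) (vt t x) (Set.Icc (0:ℝ) T) t ∧
        HasDerivWithinAt (fun y => v t y) (vx t x) (Set.Iic (0:ℝ)) x ∧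
        HasDerivWithinAt (fun y => vx t y) (vxx t x) (Set.Iic (0:ℝ)) x) ∧
      ContinuousOn (fun p : ℝ × ℝ => vt p.1 p.2) (Set.Icc (0:ℝ) T ×ˢ Set.Iic (0:ℝ)) ∧
      ContinuousOn (fun p : ℝ × ℝ => vx p.1 p.2) (Set.Icc (0:ℝ) T ×ˢ Set.Iic (0:ℝ)) ∧
      ContinuousOn (fun p : ℝ × ℝ => vxx p.1 p.2) (Set.Icc (0:ℝ) T ×ˢ Set.Iic (0:ℝ)) ∧
      (∀ t ∈ Set.Icc (0:ℝ) T, ∀ x ≤ (0:ℝ),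
        (-(vt t x) =
          (1/2) * (σ * u0 * x)^2 * vxx t x + (r + (b - r) * u0) * x * vx t x) ∧
        (∀ u ∈ Set.Icc c₁ c₂, -(vt t x) ≤
          (1/2) * (σ * u * x)^2 * vxx t x + (r + (b - r) * u) * x * vx t x)) :=
  stmt7_general r b σ β T c₁ c₂ η u0 hσ hβ hη hu0 v hv
end

section
/- Let r, b, σ, β be reals with b > r > 0, σ ≠ 0, β > 2 such that η := β(b−r)²/(2(β−1)σ²) − βr > 0, let x₀ ∈ ℝ, and let W be a standard one-dimensional Brownian motion. Then the process Xₜ := x₀·exp{[r − (2β−1)(b−r)²/(2(β−1)²σ²)]·t − ((b−r)/((β−1)σ))·Wₜ} satisfies Xₜ → 0 almost surely as t → ∞. -/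
/-!
The wealth is `x₀ * exp (μ t - c W t)` with `μ = r - (2β-1)(b-r)²/(2(β-1)²σ²)`, and `η > 0`
forces `μ < 0`: it says `r < (b-r)²/(2(β-1)σ²)`, and `(2β-1)/(β-1) ≥ 1`. So it suffices that
`W t / t → 0` almost surely. Along the integers this is the strong law of large numbers for the
i.i.d. `N(0,1)` increments `W (n+1) - W n`. Between integers, the oscillation of `W` on
`[n, n+1]` is controlled by chaining over dyadic points: Markov's inequality for fourth moments
bounds the `2^(m+1)` increments of level `m` against thresholds decaying like `θ^m` with
`2θ⁴ > 1`, so the oscillation exceeds `ε (n+1)` with probability `O(n⁻⁴)`, and Borel–Cantelli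
concludes.
-/

open MeasureTheory ProbabilityTheory Filter

/-- `W` is a standard one-dimensional Brownian motion (Wiener process) on `(Ω, F, P)`:
it starts at `0`, has continuous paths, Gaussian increments `W t - W s ~ N(0, t - s)`
for `0 ≤ s ≤ t`, and independent increments over disjoint consecutive intervals. -/
structure IsStandardBrownianMotion {Ω : Type*} [MeasurableSpace Ω] (P : Measure Ω)
    (W : ℝ → Ω → ℝ) : Prop where
  measurable : ∀ t : ℝ, Measurable (W t)
  start : ∀ᵐ ω ∂P, W 0 ω = 0
  cont : ∀ᵐ ω ∂P, Continuous fun t => W t ω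
  incr_law : ∀ s t : ℝ, 0 ≤ s → s ≤ t →
    P.map (fun ω => W t ω - W s ω) = gaussianReal 0 (Real.toNNReal (t - s))
  indep_incr : ∀ (n : ℕ) (τ : ℕ → ℝ), Monotone τ → (∀ i, 0 ≤ τ i) →
    iIndepFun
      (fun i : Fin n => fun ω => W (τ (i + 1)) ω - W (τ i) ω) P

open scoped ENNReal NNReal Topology
open Finset

lemma integral_pow_four_gaussianReal (v : ℝ≥0) :
    ∫ x, x ^ 4 ∂gaussianReal 0 v = (v : ℝ) ^ 2 * ∫ x, x ^ 4 ∂gaussianReal 0 1 := by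
  have hmap : (gaussianReal 0 1).map (√v * ·) = gaussianReal 0 v := by
    rw [gaussianReal_map_const_mul]
    congr 1
    · simp
    · ext; simp
  rw [← hmap, integral_map (by fun_prop) (by fun_prop), ← integral_const_mul]
  congr 1 with x
  rw [mul_pow, show √(v : ℝ) ^ 4 = (√(v : ℝ) ^ 2) ^ 2 by ring, Real.sq_sqrt v.coe_nonneg]

lemma gaussianReal_lt_abs_le (v : ℝ≥0) {a : ℝ} (ha : 0 < a) :
    gaussianReal 0 v {x | a < |x|} ≤
      ENNReal.ofReal ((∫ x, x ^ 4 ∂gaussianReal 0 1) * v ^ 2 / a ^ 4) := by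
  have hint : Integrable (fun x : ℝ => x ^ 4) (gaussianReal 0 v) := by
    simpa [Even.pow_abs ⟨2, rfl⟩] using
      (memLp_id_gaussianReal (μ := 0) (v := v) 4).integrable_norm_pow (by norm_num)
  have hsub : {x : ℝ | a < |x|} ⊆ {x | a ^ 4 ≤ x ^ 4} := fun x hx => by
    simpa [Even.pow_abs ⟨2, rfl⟩] using pow_le_pow_left₀ ha.le hx.le 4
  have hmarkov :=
    mul_meas_ge_le_integral_of_nonneg (ae_of_all _ fun x => by positivity) hint (a ^ 4)
  rw [integral_pow_four_gaussianReal] at hmarkov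
  rw [← ofReal_measureReal]
  gcongr
  rw [le_div_iff₀ (by positivity)]
  calc _ ≤ a ^ 4 * (gaussianReal 0 v).real {x | a ^ 4 ≤ x ^ 4} := by
        rw [mul_comm]
        exact mul_le_mul_of_nonneg_left (measureReal_mono hsub) (by positivity)
    _ ≤ _ := hmarkov.trans_eq (by ring)

lemma abs_sub_le_tsum_of_dyadic {f : ℝ → ℝ} (hf : Continuous f) {a t : ℝ}
    (ht : t ∈ Set.Ico a (a + 1)) {c : ℕ → ℝ} (hc0 : ∀ m, 0 ≤ c m) (hc : Summable c)
    (hinc : ∀ m k : ℕ, k < 2 ^ (m + 1) →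
      |f (a + (k + 1) / 2 ^ (m + 1)) - f (a + k / 2 ^ (m + 1))| ≤ c m) :
    |f t - f a| ≤ ∑' m, c m := by
  set u := t - a
  have hu0 : 0 ≤ u := sub_nonneg.2 ht.1
  have hu1 : u < 1 := by linarith [ht.2]
  -- `g M` samples `f` at the level-`M` dyadic approximation of `t` from below; passing from
  -- level `M` to `M + 1` moves it by at most one increment of level `M`.
  set d : ℕ → ℕ := fun M => ⌊u * 2 ^ M⌋₊
  set g : ℕ → ℝ := fun M => f (a + d M / 2 ^ M)
  have hg0 : g 0 = f a := by simp [g, d, Nat.floor_eq_zero.2 hu1]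
  have hstep : ∀ M, |g (M + 1) - g M| ≤ c M := by
    intro M
    have hhalf : d (M + 1) / 2 = d M := by
      simp only [d]
      rw [← Nat.floor_div_ofNat]
      congr 1
      ring
    have hlt : d M < 2 ^ M := by
      simp only [d]
      rw [Nat.floor_lt (by positivity)]
      push_cast
      exact mul_lt_of_lt_one_left (by positivity) hu1
    have hpt : (d M : ℝ) / 2 ^ M = (2 * d M : ℕ) / 2 ^ (M + 1) := by
      rw [pow_succ]
      push_cast
      field_simp
    rcases Nat.even_or_odd' (d (M + 1)) with ⟨j, hj | hj⟩
    · have hjM : j = d M := by omega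
      have : g (M + 1) = g M := by simp only [g, hpt, hj, hjM]
      simpa [this] using hc0 M
    · have hjM : j = d M := by omega
      simp only [g, hpt, hj, hjM]
      have hk : 2 * d M < 2 ^ (M + 1) := by rw [pow_succ]; omega
      convert hinc M (2 * d M) hk using 4; push_cast; ring
  have htel : ∀ M, |g M - g 0| ≤ ∑' m, c m := fun M =>
    calc |g M - g 0| = |∑ m ∈ range M, (g (m + 1) - g m)| := by rw [sum_range_sub]
      _ ≤ ∑ m ∈ range M, c m := (abs_sum_le_sum_abs _ _).trans (sum_le_sum fun m _ => hstep m)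
      _ ≤ ∑' m, c m := hc.sum_le_tsum _ fun m _ => hc0 m
  have hlim : Tendsto g atTop (𝓝 (f t)) := by
    have hdy : Tendsto (fun M => (d M : ℝ) / 2 ^ M) atTop (𝓝 u) :=
      (tendsto_nat_floor_mul_div_atTop hu0).comp
        (tendsto_pow_atTop_atTop_of_one_lt one_lt_two)
    have hpts := hdy.const_add a
    simp only [u, add_sub_cancel] at hpts
    exact (hf.tendsto t).comp hpts
  rw [← hg0]
  exact le_of_tendsto ((hlim.sub_const _).abs) (Eventually.of_forall htel)

lemma tendsto_div_atTop_of_natCast {f : ℝ → ℝ}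
    (hnat : Tendsto (fun n : ℕ => f n / n) atTop (𝓝 0))
    (hosc : ∀ ε > 0, ∀ᶠ n : ℕ in atTop, ∀ t ∈ Set.Ico (n : ℝ) (n + 1),
      |f t - f n| ≤ ε * (n + 1)) :
    Tendsto (fun t => f t / t) atTop (𝓝 0) := by
  rw [Metric.tendsto_nhds]
  intro ε hε
  have hnat' := (Metric.tendsto_nhds.1 hnat) (ε / 3) (by positivity)
  obtain ⟨N, hN⟩ := eventually_atTop.1
    ((hnat'.and (hosc (ε / 3) (by positivity))).and (eventually_ge_atTop 1))
  filter_upwards [eventually_ge_atTop (N : ℝ), eventually_gt_atTop 0] with t hNt ht0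
  set n := ⌊t⌋₊
  have htn : t ∈ Set.Ico (n : ℝ) (n + 1) := ⟨Nat.floor_le ht0.le, Nat.lt_floor_add_one t⟩
  obtain ⟨⟨hfn, hfnt⟩, hn1⟩ := hN n (Nat.le_floor hNt)
  have hn1' : (1 : ℝ) ≤ n := by exact_mod_cast hn1
  rw [Real.dist_eq, sub_zero, abs_div, Nat.abs_cast, div_lt_iff₀ (by linarith)] at hfn
  rw [Real.dist_eq, sub_zero, abs_div, abs_of_pos ht0, div_lt_iff₀ ht0]
  calc |f t| ≤ |f n| + |f t - f n| := by simpa using abs_add_le (f n) (f t - f n)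
    _ < ε / 3 * n + ε / 3 * (n + 1) := add_lt_add_of_lt_of_le hfn (hfnt t htn)
    _ ≤ ε * t := by nlinarith [htn.1]

namespace IsStandardBrownianMotion

variable {Ω : Type*} [MeasurableSpace Ω] {P : Measure Ω} {W : ℝ → Ω → ℝ}

lemma measure_lt_abs_sub_le (hW : IsStandardBrownianMotion P W) {s t : ℝ} (hs : 0 ≤ s)
    (hst : s ≤ t) {a : ℝ} (ha : 0 < a) :
    P {ω | a < |W t ω - W s ω|} ≤
      ENNReal.ofReal ((∫ x, x ^ 4 ∂gaussianReal 0 1) * (t - s) ^ 2 / a ^ 4) := by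
  have hmeas : Measurable fun ω => W t ω - W s ω := (hW.measurable t).sub (hW.measurable s)
  have hset : MeasurableSet {x : ℝ | a < |x|} := measurableSet_lt measurable_const measurable_abs
  calc P {ω | a < |W t ω - W s ω|} = P.map (fun ω => W t ω - W s ω) {x | a < |x|} :=
        (Measure.map_apply hmeas hset).symm
    _ ≤ _ := by
        rw [hW.incr_law s t hs hst]
        convert gaussianReal_lt_abs_le _ ha using 4
        rw [Real.coe_toNNReal _ (sub_nonneg.2 hst)]

lemma ae_tendsto_div_natCast (hW : IsStandardBrownianMotion P W) :
    ∀ᵐ ω ∂P, Tendsto (fun n : ℕ => W n ω / n) atTop (𝓝 0) := by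
  set Y : ℕ → Ω → ℝ := fun i ω => W (i + 1 : ℕ) ω - W i ω
  have hlaw : ∀ i, HasLaw (Y i) (gaussianReal 0 1) P := fun i =>
    ⟨((hW.measurable _).sub (hW.measurable _)).aemeasurable, by
      simpa [Y] using hW.incr_law i (i + 1 : ℕ) (by positivity) (by simp)⟩
  have hident : ∀ i, IdentDistrib (Y i) (Y 0) P P := fun i =>
    ⟨(hlaw i).aemeasurable, (hlaw 0).aemeasurable, by rw [(hlaw i).map_eq, (hlaw 0).map_eq]⟩
  have hindep : Pairwise fun i j => Y i ⟂ᵢ[P] Y j := by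
    intro i j hij
    have h := hW.indep_incr (max i j + 1) (fun k => (k : ℝ)) Nat.mono_cast fun k => k.cast_nonneg
    simpa [Y] using h.indepFun (i := ⟨i, by omega⟩) (j := ⟨j, by omega⟩) (by simpa using hij)
  have hint : Integrable (Y 0) P := by
    have : Integrable id (P.map (Y 0)) := by
      rw [(hlaw 0).map_eq]
      exact memLp_one_iff_integrable.1 (by simpa using memLp_id_gaussianReal 1)
    exact this.comp_aemeasurable (hlaw 0).aemeasurable
  have hmean : P[Y 0] = 0 := by
    rw [(hlaw 0).integral_eq, integral_id_gaussianReal]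
  filter_upwards [strong_law_ae_real Y hint hindep hident, hW.start] with ω hω h0
  rw [hmean] at hω
  convert hω using 3 with n
  simpa [Y, h0] using (sum_range_sub (fun i : ℕ => W i ω) n).symm

lemma exists_measure_lt_abs_dyadic_increment_le (hW : IsStandardBrownianMotion P W) {θ : ℝ}
    (hθ0 : 0 < θ) (hθ1 : θ < 1) (hθ : 1 < 2 * θ ^ 4) :
    ∃ C, ∀ a, 0 ≤ a → ∀ δ, 0 < δ →
      P {ω | ∃ m k : ℕ, k < 2 ^ (m + 1) ∧ δ * (1 - θ) * θ ^ m <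
        |W (a + (k + 1) / 2 ^ (m + 1)) ω - W (a + k / 2 ^ (m + 1)) ω|} ≤
      ENNReal.ofReal (C / δ ^ 4) := by
  set m₄ := ∫ x, x ^ 4 ∂gaussianReal 0 1
  set K := m₄ / (2 * (1 - θ) ^ 4)
  set ρ := (2 * θ ^ 4)⁻¹
  have hm₄ : 0 ≤ m₄ := integral_nonneg fun x => by positivity
  have hθ1' : 0 < 1 - θ := by linarith
  have hρ0 : 0 ≤ ρ := by positivity
  have hρ1 : ρ < 1 := inv_lt_one_of_one_lt₀ hθ
  refine ⟨K / (1 - ρ), fun a ha δ hδ => ?_⟩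
  have hpair : ∀ m k : ℕ, P {ω | δ * (1 - θ) * θ ^ m <
      |W (a + (k + 1) / 2 ^ (m + 1)) ω - W (a + k / 2 ^ (m + 1)) ω|} ≤
      ENNReal.ofReal (K / δ ^ 4 * ρ ^ m / 2 ^ (m + 1)) := by
    intro m k
    refine (hW.measure_lt_abs_sub_le (by positivity) (by gcongr; linarith)
      (by positivity)).trans_eq (congrArg ENNReal.ofReal ?_)
    simp only [K, ρ]
    rw [add_sub_add_left_eq_sub, ← sub_div, add_sub_cancel_left, inv_pow,
      mul_pow (2 : ℝ) (θ ^ 4) m, ← pow_mul, pow_mul']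
    field_simp
    ring
  have hlevel : ∀ m : ℕ, ∑ k ∈ range (2 ^ (m + 1)),
      ENNReal.ofReal (K / δ ^ 4 * ρ ^ m / 2 ^ (m + 1)) = ENNReal.ofReal (K / δ ^ 4 * ρ ^ m) := by
    intro m
    rw [sum_const, card_range, nsmul_eq_mul, ← ENNReal.ofReal_natCast,
      ← ENNReal.ofReal_mul (by positivity)]
    congr 1
    push_cast
    field_simp
  calc _ = P (⋃ m, ⋃ k ∈ range (2 ^ (m + 1)), {ω | δ * (1 - θ) * θ ^ m <
        |W (a + (k + 1) / 2 ^ (m + 1)) ω - W (a + k / 2 ^ (m + 1)) ω|}) := by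
        congr 1
        ext ω
        simp
    _ ≤ ∑' m, ∑ k ∈ range (2 ^ (m + 1)), ENNReal.ofReal (K / δ ^ 4 * ρ ^ m / 2 ^ (m + 1)) :=
        (measure_iUnion_le _).trans <| ENNReal.tsum_le_tsum fun m =>
          (measure_biUnion_finset_le _ _).trans <| sum_le_sum fun k _ => hpair m k
    _ = ENNReal.ofReal (∑' m, K / δ ^ 4 * ρ ^ m) := by
        simp_rw [hlevel]
        exact (ENNReal.ofReal_tsum_of_nonneg (fun m => by positivity)
          ((summable_geometric_of_lt_one hρ0 hρ1).mul_left _)).symm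
    _ = ENNReal.ofReal (K / (1 - ρ) / δ ^ 4) := by
        rw [tsum_mul_left, tsum_geometric_of_lt_one hρ0 hρ1]
        ring_nf

lemma ae_eventually_abs_sub_le (hW : IsStandardBrownianMotion P W) {ε : ℝ} (hε : 0 < ε) :
    ∀ᵐ ω ∂P, ∀ᶠ n : ℕ in atTop, ∀ t ∈ Set.Ico (n : ℝ) (n + 1),
      |W t ω - W n ω| ≤ ε * (n + 1) := by
  set θ : ℝ := 9 / 10
  obtain ⟨C, hC⟩ :=
    hW.exists_measure_lt_abs_dyadic_increment_le (θ := θ) (by norm_num) (by norm_num) (by norm_num)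
  set A : ℕ → Set Ω := fun n => {ω | ∃ m k : ℕ, k < 2 ^ (m + 1) ∧ ε * (n + 1) * (1 - θ) * θ ^ m <
    |W (n + (k + 1) / 2 ^ (m + 1)) ω - W (n + k / 2 ^ (m + 1)) ω|}
  have hsum : ∑' n, P (A n) ≠ ∞ := by
    have hs : Summable fun n : ℕ => C / (ε * (n + 1)) ^ 4 := by
      have := ((summable_nat_add_iff 1).2
        (Real.summable_one_div_nat_pow.2 (by norm_num : 1 < 4))).mul_left (C / ε ^ 4)
      refine this.congr fun n => ?_
      push_cast
      field_simp
    exact ne_top_of_le_ne_top hs.tsum_ofReal_ne_top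
      (ENNReal.tsum_le_tsum fun n => hC n (by positivity) _ (by positivity))
  have hθ : Summable fun m : ℕ => θ ^ m := summable_geometric_of_lt_one (by norm_num) (by norm_num)
  filter_upwards [ae_eventually_notMem hsum, hW.cont] with ω hω hcont
  filter_upwards [hω] with n hn t ht
  have hgeom : ∑' m, ε * (n + 1) * (1 - θ) * θ ^ m = ε * (n + 1) := by
    rw [tsum_mul_left, tsum_geometric_of_lt_one (by norm_num) (by norm_num)]
    simp only [θ]
    ring
  rw [← hgeom]
  refine abs_sub_le_tsum_of_dyadic hcont ht (fun m => by positivity) (hθ.mul_left _)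
    fun m k hk => ?_
  simp only [A, Set.mem_ofPred_eq, not_exists, not_and, not_lt] at hn
  exact hn m k hk

lemma ae_tendsto_div_atTop (hW : IsStandardBrownianMotion P W) :
    ∀ᵐ ω ∂P, Tendsto (fun t => W t ω / t) atTop (𝓝 0) := by
  filter_upwards [hW.ae_tendsto_div_natCast,
    ae_all_iff.2 fun j : ℕ => hW.ae_eventually_abs_sub_le (Nat.one_div_pos_of_nat (n := j))]
    with ω hnat hosc
  refine tendsto_div_atTop_of_natCast hnat fun ε hε => ?_
  obtain ⟨j, hj⟩ := exists_nat_one_div_lt hε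
  filter_upwards [hosc j] with n hn t ht
  exact (hn t ht).trans (by gcongr)

end IsStandardBrownianMotion

lemma closedLoop_drift_neg {r b σ β : ℝ} (hβ : 1 < β)
    (hη : 0 < β * (b - r) ^ 2 / (2 * (β - 1) * σ ^ 2) - β * r) :
    r - (2 * β - 1) * (b - r) ^ 2 / (2 * (β - 1) ^ 2 * σ ^ 2) < 0 := by
  set Q := (b - r) ^ 2 / (2 * (β - 1) * σ ^ 2)
  have hβ1 : 0 < β - 1 := by linarith
  have hQr : r < Q := by
    have : 0 < β * (Q - r) := by convert hη using 1; simp only [Q]; ring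
    nlinarith
  have hsplit : (2 * β - 1) * (b - r) ^ 2 / (2 * (β - 1) ^ 2 * σ ^ 2) = Q + β / (β - 1) * Q := by
    simp only [Q]
    field_simp
    ring
  have : 0 ≤ β / (β - 1) * Q := by positivity
  linarith

theorem stmt11_general (r b σ β : ℝ) (hβ : 2 < β)
    (hη : 0 < β * (b - r)^2 / (2 * (β - 1) * σ^2) - β * r) (x₀ : ℝ)
    {Ω : Type*} [MeasurableSpace Ω] (P : Measure Ω)
    (W : ℝ → Ω → ℝ) (hW : IsStandardBrownianMotion P W)
    (X : ℝ → Ω → ℝ)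
    (hX : X = fun t ω => x₀ * Real.exp
      ((r - (2 * β - 1) * (b - r)^2 / (2 * (β - 1)^2 * σ^2)) * t
        - ((b - r) / ((β - 1) * σ)) * W t ω)) :
    ∀ᵐ ω ∂P, Tendsto (fun t : ℝ => X t ω) atTop (nhds 0) := by
  set μ := r - (2 * β - 1) * (b - r) ^ 2 / (2 * (β - 1) ^ 2 * σ ^ 2)
  set c := (b - r) / ((β - 1) * σ)
  have hμ : μ < 0 := closedLoop_drift_neg (by linarith) hη
  filter_upwards [hW.ae_tendsto_div_atTop] with ω hω
  have hexponent : Tendsto (fun t => μ * t - c * W t ω) atTop atBot := by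
    have hslope : Tendsto (fun t => μ - c * (W t ω / t)) atTop (𝓝 μ) := by
      simpa using tendsto_const_nhds.sub (hω.const_mul c)
    refine (tendsto_id.atTop_mul_neg hμ hslope).congr' ?_
    filter_upwards [eventually_gt_atTop 0] with t ht
    simp only [id]
    field_simp
  subst hX
  simpa using (Real.tendsto_exp_atBot.comp hexponent).const_mul x₀

theorem stmt11 (r b σ β : ℝ) (hbr : r < b) (hr : 0 < r) (hσ : σ ≠ 0) (hβ : 2 < β)
    (hη : 0 < β * (b - r)^2 / (2 * (β - 1) * σ^2) - β * r) (x₀ : ℝ)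
    {Ω : Type*} [MeasurableSpace Ω] (P : Measure Ω) [IsProbabilityMeasure P]
    (W : ℝ → Ω → ℝ) (hW : IsStandardBrownianMotion P W)
    (X : ℝ → Ω → ℝ)
    (hX : X = fun t ω => x₀ * Real.exp
      ((r - (2 * β - 1) * (b - r)^2 / (2 * (β - 1)^2 * σ^2)) * t
        - ((b - r) / ((β - 1) * σ)) * W t ω)) :
    ∀ᵐ ω ∂P, Tendsto (fun t : ℝ => X t ω) atTop (nhds 0) :=
  stmt11_general r b σ β hβ hη x₀ P W hW X hX
end
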